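/- Let m ≥ 1, β = 0, and suppose a planar polygon evolves by pure rotation X(t) = X_0 e^{i f(t)} (viewing X_0 ∈ ℂ^n), where f is twice differentiable, f(0) = 0, and X satisfies X'' = (-1)^{m+1}M^m X for all t. If X_0 ≠ 0, then f'(t) is constant equal to some b with b² = 4^m sin^{2m}(πk/n) for some k ∈ {0,...,n-1}, and X_0 lies in the eigenspace of (-1)^{m+1}M^m with eigenvalue -b². -/

import Mathlib

/-!
With `X t = e^{i f t} • X₀` the equation reads `(i f'' - f'²) • X₀ = (-1)^{m+1} M^m X₀`
for every `t`, so `i f'' - f'²` is a constant eigenvalue of `(-1)^{m+1} M^m`. Its real part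
makes `f'²` constant, which forces `f'' = 0` (if the constant is nonzero, `f'` never vanishes
and `2 f' f'' = 0`), so `f' ≡ b` and the eigenvalue is `-b²`. The Fourier modes `j ↦ ζ^{kj}`,
`ζ = e^{2πi/n}`, are eigenvectors of `M` with eigenvalues `ζ^k + ζ^{-k} - 2 = -4 sin²(πk/n)`
and form an invertible Vandermonde matrix, so every eigenvalue of `(-1)^{m+1} M^m` is one of
the `-4^m sin^{2m}(πk/n)`.
-/

/-- The discrete Laplacian circulant matrix `circ(-2,1,0,…,0,1)` over `ℂ`. -/
noncomputable def lapM (n : ℕ) [NeZero n] : Matrix (Fin n) (Fin n) ℂ :=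
  Matrix.of fun i j =>
    (if j = i + 1 then 1 else 0) + (if j = i - 1 then 1 else 0) + (if j = i then -2 else 0)

open Matrix Complex

lemma pow_val_add_of_pow_eq_one {M : Type*} [Monoid M] {n : ℕ} [NeZero n] {η : M}
    (hη : η ^ n = 1) (i j : Fin n) : η ^ ((i + j : Fin n) : ℕ) = η ^ (i : ℕ) * η ^ (j : ℕ) := by
  rw [Fin.val_add, ← pow_eq_pow_mod _ hη, pow_add]

lemma pow_val_one_of_pow_eq_one {M : Type*} [Monoid M] {n : ℕ} [NeZero n] {η : M}
    (hη : η ^ n = 1) : η ^ ((1 : Fin n) : ℕ) = η := by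
  rw [Fin.val_one', ← pow_eq_pow_mod _ hη, pow_one]

lemma Complex.exp_add_inv_sub_two (θ : ℝ) :
    exp (2 * θ * I) + (exp (2 * θ * I))⁻¹ - 2 = -4 * sin θ ^ 2 := by
  rw [← exp_neg, ← neg_mul, ← two_cos, cos_two_mul, cos_sq']
  ring

lemma mulVec_pow_of_mulVec_eq_smul {ι R : Type*} [Fintype ι] [DecidableEq ι] [CommSemiring R]
    {A : Matrix ι ι R} {v : ι → R} {μ : R} (h : A *ᵥ v = μ • v) (m : ℕ) :
    A ^ m *ᵥ v = μ ^ m • v := by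
  induction m with
  | zero => simp
  | succ m ih => rw [pow_succ, ← mulVec_mulVec, h, mulVec_smul, ih, smul_smul, pow_succ']

lemma exists_eq_of_mul_eq_mul_diagonal {ι K : Type*} [Fintype ι] [DecidableEq ι] [Field K]
    {A F : Matrix ι ι K} {d : ι → K} (hF : IsUnit F.det) (hAF : A * F = F * diagonal d)
    {v : ι → K} (hv : v ≠ 0) {c : K} (h : A *ᵥ v = c • v) : ∃ k, d k = c := by
  set a := F⁻¹ *ᵥ v
  have hFa : F *ᵥ a = v := by simp [a, mulVec_mulVec, mul_nonsing_inv _ hF]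
  have ha : a ≠ 0 := by
    rintro ha
    simp [ha, eq_comm, hv] at hFa
  have hda : diagonal d *ᵥ a = c • a := by
    have hF_da : F *ᵥ (diagonal d *ᵥ a) = F *ᵥ (c • a) := by
      rw [mulVec_mulVec, ← hAF, ← mulVec_mulVec, hFa, h, mulVec_smul, hFa]
    simpa [mulVec_mulVec, ← Matrix.mul_assoc, nonsing_inv_mul _ hF]
      using congrArg (F⁻¹ *ᵥ ·) hF_da
  obtain ⟨k, hk⟩ := Function.ne_iff.mp ha
  refine ⟨k, mul_right_cancel₀ hk ?_⟩
  simpa [mulVec_diagonal] using congrFun hda k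

noncomputable def fourierMode (n k : ℕ) : Fin n → ℂ :=
  fun j => (exp (2 * Real.pi * I / n) ^ k) ^ (j : ℕ)

noncomputable def fourierMatrix (n : ℕ) : Matrix (Fin n) (Fin n) ℂ :=
  of fun j k => fourierMode n k j

noncomputable def lapEigenvalue (n m k : ℕ) : ℝ :=
  -(4 ^ m * Real.sin (Real.pi * k / n) ^ (2 * m))

section Laplacian

variable {n : ℕ} [NeZero n]

lemma lapM_mulVec_apply (v : Fin n → ℂ) (i : Fin n) :
    (lapM n *ᵥ v) i = v (i + 1) + v (i - 1) - 2 * v i := by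
  simp only [mulVec, dotProduct, lapM, of_apply, add_mul, ite_mul, one_mul, zero_mul,
    Finset.sum_add_distrib, Finset.sum_ite_eq', Finset.mem_univ, if_true]
  ring

lemma lapM_mulVec_powers {η : ℂ} (hη : η ^ n = 1) :
    lapM n *ᵥ (fun j : Fin n => η ^ (j : ℕ)) = (η + η⁻¹ - 2) • fun j : Fin n => η ^ (j : ℕ) := by
  have hη0 : η ≠ 0 := by rintro rfl; simp [NeZero.ne n] at hη
  funext i
  have hsub : η ^ ((i - 1 : Fin n) : ℕ) = η ^ (i : ℕ) * η⁻¹ := by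
    have h := pow_val_add_of_pow_eq_one hη (i - 1) 1
    rw [sub_add_cancel, pow_val_one_of_pow_eq_one hη] at h
    rw [h, mul_inv_cancel_right₀ hη0]
  rw [lapM_mulVec_apply, pow_val_add_of_pow_eq_one hη, pow_val_one_of_pow_eq_one hη, hsub,
    Pi.smul_apply, smul_eq_mul]
  ring

lemma lapM_mulVec_fourierMode (k : ℕ) :
    lapM n *ᵥ fourierMode n k = (-4 * sin (Real.pi * k / n) ^ 2) • fourierMode n k := by
  have hroot : (exp (2 * Real.pi * I / n) ^ k) ^ n = 1 := by
    rw [← pow_mul, mul_comm k n, pow_mul, (isPrimitiveRoot_exp n (NeZero.ne n)).pow_eq_one,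
      one_pow]
  have hexp : exp (2 * Real.pi * I / n) ^ k = exp (2 * (Real.pi * k / n : ℝ) * I) := by
    rw [← exp_nat_mul]; push_cast; congr 1; ring
  unfold fourierMode
  rw [lapM_mulVec_powers hroot, hexp, exp_add_inv_sub_two]
  push_cast; rfl

lemma lapM_pow_mulVec_fourierMode (m k : ℕ) :
    ((-1 : ℂ) ^ (m + 1) • lapM n ^ m) *ᵥ fourierMode n k
      = (lapEigenvalue n m k : ℂ) • fourierMode n k := by
  rw [smul_mulVec, mulVec_pow_of_mulVec_eq_smul (lapM_mulVec_fourierMode k), smul_smul,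
    lapEigenvalue]
  push_cast
  congr 1
  calc (-1 : ℂ) ^ (m + 1) * (-4 * sin (Real.pi * k / n) ^ 2) ^ m
      = (-1) ^ (2 * m + 1) * (4 ^ m * sin (Real.pi * k / n) ^ (2 * m)) := by
        rw [neg_mul, neg_pow (4 * _), mul_pow, ← pow_mul]; ring
    _ = _ := by rw [(odd_two_mul_add_one m).neg_one_pow]; ring

lemma isUnit_det_fourierMatrix : IsUnit (fourierMatrix n).det := by
  have hF : fourierMatrix n = vandermonde fun j : Fin n => exp (2 * Real.pi * I / n) ^ (j : ℕ) := by
    ext j k; simp only [fourierMatrix, of_apply, fourierMode, vandermonde, ← pow_mul, mul_comm]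
  rw [isUnit_iff_ne_zero, hF, det_vandermonde_ne_zero_iff]
  intro i j hij
  exact Fin.ext ((isPrimitiveRoot_exp n (NeZero.ne n)).pow_inj i.isLt j.isLt hij)

lemma exists_eq_lapEigenvalue_of_mulVec_eq_smul (m : ℕ) {v : Fin n → ℂ} (hv : v ≠ 0) {c : ℂ}
    (h : ((-1 : ℂ) ^ (m + 1) • lapM n ^ m) *ᵥ v = c • v) :
    ∃ k < n, c = lapEigenvalue n m k := by
  have hAF : ((-1 : ℂ) ^ (m + 1) • lapM n ^ m) * fourierMatrix n
      = fourierMatrix n * diagonal fun k : Fin n => (lapEigenvalue n m k : ℂ) := by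
    ext j k
    rw [mul_diagonal]
    simpa [fourierMatrix, mulVec, dotProduct, mul_apply, mul_comm]
      using congrFun (lapM_pow_mulVec_fourierMode m k) j
  obtain ⟨k, hk⟩ := exists_eq_of_mul_eq_mul_diagonal isUnit_det_fourierMatrix hAF hv h
  exact ⟨k, k.isLt, hk.symm⟩

end Laplacian

lemma deriv_eq_zero_of_sq_eq_const {u : ℝ → ℝ} (hu : Differentiable ℝ u) {c : ℝ}
    (h : ∀ t, u t ^ 2 = c) (t : ℝ) : deriv u t = 0 := by
  by_cases hc : c = 0
  · have hu0 : u = 0 := funext fun s => pow_eq_zero_iff two_ne_zero |>.mp ((h s).trans hc)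
    simp [hu0]
  · have hut : u t ≠ 0 := fun h0 => hc (by rw [← h t, h0, sq, zero_mul])
    have hsq : deriv (fun s => u s ^ 2) t = 0 := by simp [funext h]
    rw [((hu t).hasDerivAt.fun_pow 2).deriv] at hsq
    simpa [hut] using hsq

lemma hasDerivAt_cexp_I_mul {f : ℝ → ℝ} {f' t : ℝ} (hf : HasDerivAt f f' t) :
    HasDerivAt (fun s => exp (I * f s)) (exp (I * f t) * (I * f')) t :=
  (hf.ofReal_comp.const_mul I).cexp

lemma deriv_deriv_cexp_I_mul_smul {E : Type*} [NormedAddCommGroup E] [NormedSpace ℂ E]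
    {f : ℝ → ℝ} (hf : Differentiable ℝ f) (hf' : Differentiable ℝ (deriv f)) (v : E) (t : ℝ) :
    deriv (deriv fun s => exp (I * f s) • v) t
      = (exp (I * f t) * (I * deriv (deriv f) t - deriv f t ^ 2)) • v := by
  have hX' : deriv (fun s => exp (I * f s) • v) = fun s => (exp (I * f s) * (I * deriv f s)) • v :=
    funext fun s => ((hasDerivAt_cexp_I_mul (hf s).hasDerivAt).smul_const v).deriv
  have hg' : HasDerivAt (fun s => exp (I * f s) * (I * deriv f s))
      (exp (I * f t) * (I * deriv (deriv f) t - deriv f t ^ 2)) t := by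
    refine ((hasDerivAt_cexp_I_mul (hf t).hasDerivAt).mul
      ((hf' t).hasDerivAt.ofReal_comp.const_mul I)).congr_deriv ?_
    linear_combination exp (I * f t) * deriv f t ^ 2 * I_sq
  rw [hX', (hg'.smul_const v).deriv]

theorem undamped_rotators_general (n m : ℕ) [NeZero n]
    (f : ℝ → ℝ) (hf : Differentiable ℝ f) (hf' : Differentiable ℝ (deriv f))
    (X₀ : Fin n → ℂ) (hX₀ : X₀ ≠ 0)
    (X : ℝ → Fin n → ℂ)
    (hX : ∀ t : ℝ, X t = fun j => X₀ j * Complex.exp (Complex.I * (f t : ℂ)))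
    (hflow : ∀ t : ℝ, deriv (deriv X) t
      = ((-1 : ℂ) ^ (m + 1) • (lapM n) ^ m).mulVec (X t)) :
    ∃ b : ℝ, ∃ k : ℕ, k < n ∧ (∀ t : ℝ, deriv f t = b) ∧
      b ^ 2 = (4 : ℝ) ^ m * Real.sin (Real.pi * k / n) ^ (2 * m) ∧
      ((-1 : ℂ) ^ (m + 1) • (lapM n) ^ m).mulVec X₀ = ((-(b ^ 2) : ℝ) : ℂ) • X₀ := by
  set A := (-1 : ℂ) ^ (m + 1) • lapM n ^ m
  have hXt : X = fun t => exp (I * f t) • X₀ :=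
    funext fun t => (hX t).trans (by ext; simp [mul_comm])
  have hA : ∀ t, A *ᵥ X₀ = (I * deriv (deriv f) t - deriv f t ^ 2) • X₀ := fun t => by
    have h := hflow t
    rw [hXt, deriv_deriv_cexp_I_mul_smul hf hf', mulVec_smul, mul_smul] at h
    exact (smul_right_injective _ (exp_ne_zero _) h).symm
  have hsq : ∀ t, deriv f t ^ 2 = deriv f 0 ^ 2 := fun t => by
    simpa [← ofReal_pow] using congrArg re (smul_left_injective ℂ hX₀ ((hA t).symm.trans (hA 0)))
  have hf'' := deriv_eq_zero_of_sq_eq_const hf' hsq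
  have hb : A *ᵥ X₀ = ((-(deriv f 0 ^ 2) : ℝ) : ℂ) • X₀ := by
    rw [hA 0, hf'' 0]; congr 1; push_cast; ring
  obtain ⟨k, hk, hbk⟩ := exists_eq_lapEigenvalue_of_mulVec_eq_smul m hX₀ hb
  refine ⟨deriv f 0, k, hk, fun t => is_const_of_deriv_eq_zero hf' hf'' t 0, ?_, hb⟩
  rwa [lapEigenvalue, ofReal_inj, neg_inj] at hbk

/-- Undamped rotating self-similar solutions: if `X(t) = X₀ e^{i f(t)}` solves
`X'' = (-1)^{m+1} M^m X` with `f(0) = 0` and `X₀ ≠ 0`, then `f' ≡ b` with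
`b² = 4^m sin^{2m}(πk/n)` for some `k`, and `X₀` is an eigenvector of
`(-1)^{m+1} M^m` with eigenvalue `-b²`. -/
theorem undamped_rotators (n m : ℕ) [NeZero n] (hm : 1 ≤ m)
    (f : ℝ → ℝ) (hf : Differentiable ℝ f) (hf' : Differentiable ℝ (deriv f))
    (hf0 : f 0 = 0) (X₀ : Fin n → ℂ) (hX₀ : X₀ ≠ 0)
    (X : ℝ → Fin n → ℂ)
    (hX : ∀ t : ℝ, X t = fun j => X₀ j * Complex.exp (Complex.I * (f t : ℂ)))
    (hflow : ∀ t : ℝ, deriv (deriv X) t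
      = ((-1 : ℂ) ^ (m + 1) • (lapM n) ^ m).mulVec (X t)) :
    ∃ b : ℝ, ∃ k : ℕ, k < n ∧ (∀ t : ℝ, deriv f t = b) ∧
      b ^ 2 = (4 : ℝ) ^ m * Real.sin (Real.pi * k / n) ^ (2 * m) ∧
      ((-1 : ℂ) ^ (m + 1) • (lapM n) ^ m).mulVec X₀ = ((-(b ^ 2) : ℝ) : ℂ) • X₀ :=
  undamped_rotators_general n m f hf hf' X₀ hX₀ X hX hflow
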